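/- Let F = σ(h), let v be an F-measurable square-integrable R^n-valued random vector, and let d be an R^n-valued random vector independent of h with E(d) = 0, E|d|⁴ < ∞, Σ := E(ddᵀ), γ := E(d(dᵀQd)) for a symmetric Q ∈ R^{n×n}. Let x̂ be F-measurable and square-integrable, and set y := dᵀQd − tr(ΣQ) + 2x̂ᵀQd. Then for any deterministic matrix M ∈ R^{n×n}, the random variable vᵀ M d · y is integrable and E(vᵀ M d · y) = E(vᵀ M γ) + 2 E(vᵀ M Σ Q x̂). -/

import Mathlib

/-
Expanding the dot products in coordinates writes the integrand as a finite sum of products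
`f ω * g (d ω)`, where `f` is a monomial in the coordinates of `v` and `x̂`, hence
`σ(h)`-measurable, and `g` is a polynomial of degree at most three. Independence of `d` and `h`
factorizes the expectation of every such product. The mean-zero hypothesis kills the trace term,
the third moments of `d` assemble into `γ` and the second moments into `Σ`; the symmetry of `Q`
turns `E[d dᵀ] Qᵀ` into `Σ Q`. Integrability is Hölder's inequality: `d ∈ L⁴` gives
`dᵀ Q d ∈ L²`.
-/

open MeasureTheory ProbabilityTheory Matrix BigOperators

open scoped ENNReal

instance ENNReal.HolderTriple.instFourFourTwo : ENNReal.HolderTriple 4 4 2 := ⟨by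
  rw [← two_mul, show (4 : ℝ≥0∞) = 2 * 2 by norm_num, ENNReal.mul_inv (by simp) (by simp),
    ← mul_assoc, ENNReal.mul_inv_cancel (by simp) (by simp), one_mul]⟩

theorem Matrix.dotProduct_mul_eq_sum {ι : Type*} [Fintype ι] (a u : ι → ℝ) (s : ℝ) :
    (a ⬝ᵥ u) * s = ∑ i, a i * (u i * s) := by
  simp only [dotProduct, Finset.sum_mul, mul_assoc]

theorem Matrix.dotProduct_mul_dotProduct_eq_sum {ι : Type*} [Fintype ι] (a u b w : ι → ℝ) :
    (a ⬝ᵥ u) * (b ⬝ᵥ w) = ∑ p : ι × ι, a p.1 * b p.2 * (u p.1 * w p.2) := by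
  simp only [dotProduct, Finset.sum_mul_sum, ← Finset.univ_product_univ, Finset.sum_product]
  exact Finset.sum_congr rfl fun i _ => Finset.sum_congr rfl fun k _ => by ring

section Independence

variable {Ω β γ δ ε : Type*} {mΩ : MeasurableSpace Ω} [MeasurableSpace β] [mγ : MeasurableSpace γ]
  [MeasurableSpace δ] [MeasurableSpace ε] {μ : Measure Ω} {d : Ω → β} {h : Ω → γ}

theorem ProbabilityTheory.IndepFun.indepFun_comp_of_measurable_comap (hdh : IndepFun d h μ)
    {f : Ω → δ} (hf : Measurable[mγ.comap h] f) {g : β → ε} (hg : Measurable g) :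
    IndepFun f (g ∘ d) μ := by
  rw [IndepFun_iff_Indep] at hdh ⊢
  refine indep_of_indep_of_le hdh.symm hf.comap_le ?_
  rw [← MeasurableSpace.comap_comp]
  exact MeasurableSpace.comap_mono hg.comap_le

variable {ι : Type*} [Fintype ι] {f : ι → Ω → ℝ} {g : ι → β → ℝ}

theorem ProbabilityTheory.IndepFun.integrable_sum_mul_comp (hdh : IndepFun d h μ)
    (hf : ∀ a, Measurable[mγ.comap h] (f a)) (hfi : ∀ a, Integrable (f a) μ)
    (hg : ∀ a, Measurable (g a)) (hgi : ∀ a, Integrable (fun ω => g a (d ω)) μ) :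
    Integrable (fun ω => ∑ a, f a ω * g a (d ω)) μ :=
  integrable_finsetSum _ fun a _ =>
    (hdh.indepFun_comp_of_measurable_comap (hf a) (hg a)).integrable_mul (hfi a) (hgi a)

theorem ProbabilityTheory.IndepFun.integral_sum_mul_comp (hdh : IndepFun d h μ)
    (hf : ∀ a, Measurable[mγ.comap h] (f a)) (hfi : ∀ a, Integrable (f a) μ)
    (hg : ∀ a, Measurable (g a)) (hgi : ∀ a, Integrable (fun ω => g a (d ω)) μ) :
    ∫ ω, ∑ a, f a ω * g a (d ω) ∂μ = ∑ a, (∫ ω, f a ω ∂μ) * ∫ ω, g a (d ω) ∂μ := by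
  have hindep a := hdh.indepFun_comp_of_measurable_comap (hf a) (hg a)
  have hint a : Integrable (fun ω => f a ω * g a (d ω)) μ :=
    (hindep a).integrable_mul (hfi a) (hgi a)
  rw [integral_finsetSum _ fun a _ => hint a]
  exact Finset.sum_congr rfl fun a _ =>
    (hindep a).integral_fun_mul_eq_mul_integral (hfi a).1 (hgi a).1

end Independence

section VectorIntegrals

variable {Ω ι κ : Type*} [Fintype ι] {mΩ : MeasurableSpace Ω} {μ : Measure Ω} {p : ℝ≥0∞}

theorem MeasureTheory.MemLp.mulVec (A : Matrix κ ι ℝ) [Fintype κ] {w : Ω → ι → ℝ}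
    (hw : MemLp w p μ) : MemLp (fun ω => A *ᵥ w ω) p μ :=
  (LinearMap.toContinuousLinearMap A.mulVecLin).comp_memLp' hw

theorem MeasureTheory.MemLp.dotProduct {q r : ℝ≥0∞} [ENNReal.HolderTriple p q r]
    {w u : Ω → ι → ℝ} (hw : MemLp w p μ) (hu : MemLp u q μ) :
    MemLp (fun ω => w ω ⬝ᵥ u ω) r μ :=
  memLp_finsetSum _ fun i _ => (hu.eval i).mul' (hw.eval i)

theorem integral_mulVec_apply_mul (A : Matrix κ ι ℝ) {w : Ω → ι → ℝ} {s : Ω → ℝ}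
    (hws : ∀ j, Integrable (fun ω => w ω j * s ω) μ) (i : κ) :
    ∫ ω, (A *ᵥ w ω) i * s ω ∂μ = (A *ᵥ fun j => ∫ ω, w ω j * s ω ∂μ) i := by
  simp only [mulVec, dotProduct, Finset.sum_mul, mul_assoc]
  rw [integral_finsetSum _ fun j _ => (hws j).const_mul _]
  simp only [integral_const_mul]

theorem integral_dotProduct_const {w : Ω → ι → ℝ} (hw : ∀ i, Integrable (fun ω => w ω i) μ)
    (c : ι → ℝ) : ∫ ω, w ω ⬝ᵥ c ∂μ = ∑ i, (∫ ω, w ω i ∂μ) * c i := by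
  simp only [dotProduct]
  rw [integral_finsetSum _ fun i _ => (hw i).mul_const _]
  simp only [integral_mul_const]

theorem integral_dotProduct_mulVec {w u : Ω → ι → ℝ}
    (hwu : ∀ a : ι × ι, Integrable (fun ω => w ω a.1 * u ω a.2) μ) (A : Matrix ι ι ℝ) :
    ∫ ω, w ω ⬝ᵥ A *ᵥ u ω ∂μ = ∑ a : ι × ι, (∫ ω, w ω a.1 * u ω a.2 ∂μ) * A a.1 a.2 := by
  have hexpand ω : w ω ⬝ᵥ A *ᵥ u ω = ∑ a : ι × ι, w ω a.1 * u ω a.2 * A a.1 a.2 := by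
    simp only [dotProduct, mulVec, Fintype.sum_prod_type, Finset.mul_sum]
    exact Finset.sum_congr rfl fun i _ => Finset.sum_congr rfl fun k _ => by ring
  simp only [hexpand]
  rw [integral_finsetSum _ fun a _ => (hwu a).mul_const _]
  simp only [integral_mul_const]

end VectorIntegrals

section Moments

variable {Ω ι : Type*} [Fintype ι] {mΩ : MeasurableSpace Ω} {μ : Measure Ω} {d : Ω → ι → ℝ}

theorem integral_mulVec_apply_mul_quadForm_sub [IsFiniteMeasure μ] (hd4 : MemLp d 4 μ)
    (hmean : ∀ j, ∫ ω, d ω j ∂μ = 0) (M Q : Matrix ι ι ℝ) {γ : ι → ℝ}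
    (hγ : ∀ j, γ j = ∫ ω, d ω j * (d ω ⬝ᵥ Q *ᵥ d ω) ∂μ) (t : ℝ) (i : ι) :
    ∫ ω, (M *ᵥ d ω) i * (d ω ⬝ᵥ Q *ᵥ d ω - t) ∂μ = (M *ᵥ γ) i := by
  have hd2 : MemLp d 2 μ := hd4.mono_exponent (by norm_num)
  have hq : MemLp (fun ω => d ω ⬝ᵥ Q *ᵥ d ω) 2 μ := hd4.dotProduct (hd4.mulVec Q)
  rw [integral_mulVec_apply_mul (s := fun ω => d ω ⬝ᵥ Q *ᵥ d ω - t) M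
    (fun j => (hd2.eval j).integrable_mul (hq.sub (memLp_const t))) i]
  congr 2
  funext j
  have hdq : Integrable (fun ω => d ω j * (d ω ⬝ᵥ Q *ᵥ d ω)) μ := (hd2.eval j).integrable_mul hq
  simp only [mul_sub]
  rw [integral_sub hdq ((hd2.eval j).integrable one_le_two |>.mul_const t),
    integral_mul_const, hmean j, zero_mul, sub_zero, hγ j]

theorem integral_mulVec_apply_mul_mulVec_apply (hd2 : MemLp d 2 μ) (M Q : Matrix ι ι ℝ)
    (hQ : Q.IsSymm) {S : Matrix ι ι ℝ} (hS : ∀ j l, S j l = ∫ ω, d ω j * d ω l ∂μ) (i k : ι) :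
    ∫ ω, (M *ᵥ d ω) i * (Q *ᵥ d ω) k ∂μ = (M * S * Q) i k := by
  have hdQd j : ∫ ω, d ω j * (Q *ᵥ d ω) k ∂μ = (S * Q) j k := by
    simp only [mul_comm (d _ j)]
    rw [integral_mulVec_apply_mul (s := fun ω => d ω j) Q
      (fun l => (hd2.eval l).integrable_mul (hd2.eval j)) k]
    simp only [mulVec, dotProduct, mul_apply, hS, hQ.apply]
    refine Finset.sum_congr rfl fun l _ => ?_
    rw [mul_comm (Q k l)]
    simp only [mul_comm (d _ l)]
  rw [integral_mulVec_apply_mul (s := fun ω => (Q *ᵥ d ω) k) M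
    (fun j => (hd2.eval j).integrable_mul ((hd2.mulVec Q).eval k)) i]
  simp only [hdQd, Matrix.mul_assoc]
  rfl

end Moments

section Factorization

variable {Ω γ ι : Type*} [Fintype ι] {mΩ : MeasurableSpace Ω} [mγ : MeasurableSpace γ]
  {μ : Measure Ω} {h : Ω → γ} {v d : Ω → ι → ℝ}

theorem ProbabilityTheory.IndepFun.integrable_and_integral_dotProduct_mulVec_mul_quadForm_sub
    [IsFiniteMeasure μ] (hdh : IndepFun d h μ) (hv : Measurable[mγ.comap h] v)
    (hv2 : MemLp v 2 μ) (hd4 : MemLp d 4 μ) (hmean : ∀ j, ∫ ω, d ω j ∂μ = 0)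
    (M Q : Matrix ι ι ℝ) {γ : ι → ℝ} (hγ : ∀ j, γ j = ∫ ω, d ω j * (d ω ⬝ᵥ Q *ᵥ d ω) ∂μ)
    (t : ℝ) :
    Integrable (fun ω => (v ω ⬝ᵥ M *ᵥ d ω) * (d ω ⬝ᵥ Q *ᵥ d ω - t)) μ ∧
      ∫ ω, (v ω ⬝ᵥ M *ᵥ d ω) * (d ω ⬝ᵥ Q *ᵥ d ω - t) ∂μ = ∫ ω, v ω ⬝ᵥ M *ᵥ γ ∂μ := by
  have hd2 : MemLp d 2 μ := hd4.mono_exponent (by norm_num)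
  have hvF i : Measurable[mγ.comap h] (fun ω => v ω i) := (measurable_pi_apply i).comp hv
  have hvi i : Integrable (fun ω => v ω i) μ := (hv2.eval i).integrable one_le_two
  have hg i : Measurable fun x : ι → ℝ => (M *ᵥ x) i * (x ⬝ᵥ Q *ᵥ x - t) :=
    (by fun_prop : Continuous _).measurable
  have hq : MemLp (fun ω => d ω ⬝ᵥ Q *ᵥ d ω - t) 2 μ :=
    (hd4.dotProduct (hd4.mulVec Q)).sub (memLp_const t)
  have hgi i : Integrable (fun ω => (M *ᵥ d ω) i * (d ω ⬝ᵥ Q *ᵥ d ω - t)) μ :=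
    ((hd2.mulVec M).eval i).integrable_mul hq
  simp only [dotProduct_mul_eq_sum]
  refine ⟨hdh.integrable_sum_mul_comp hvF hvi hg hgi, ?_⟩
  rw [hdh.integral_sum_mul_comp hvF hvi hg hgi, integral_dotProduct_const hvi]
  simp only [integral_mulVec_apply_mul_quadForm_sub hd4 hmean M Q hγ]

theorem ProbabilityTheory.IndepFun.integrable_and_integral_dotProduct_mulVec_mul_dotProduct_mulVec
    {x : Ω → ι → ℝ} (hdh : IndepFun d h μ) (hv : Measurable[mγ.comap h] v)
    (hx : Measurable[mγ.comap h] x) (hv2 : MemLp v 2 μ) (hx2 : MemLp x 2 μ) (hd2 : MemLp d 2 μ)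
    (M : Matrix ι ι ℝ) {Q : Matrix ι ι ℝ} (hQ : Q.IsSymm) {S : Matrix ι ι ℝ}
    (hS : ∀ j l, S j l = ∫ ω, d ω j * d ω l ∂μ) :
    Integrable (fun ω => (v ω ⬝ᵥ M *ᵥ d ω) * (x ω ⬝ᵥ Q *ᵥ d ω)) μ ∧
      ∫ ω, (v ω ⬝ᵥ M *ᵥ d ω) * (x ω ⬝ᵥ Q *ᵥ d ω) ∂μ = ∫ ω, v ω ⬝ᵥ (M * S * Q) *ᵥ x ω ∂μ := by
  have hvxF (a : ι × ι) : Measurable[mγ.comap h] (fun ω => v ω a.1 * x ω a.2) :=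
    ((measurable_pi_apply a.1).comp hv).mul ((measurable_pi_apply a.2).comp hx)
  have hvxi (a : ι × ι) : Integrable (fun ω => v ω a.1 * x ω a.2) μ :=
    (hv2.eval a.1).integrable_mul (hx2.eval a.2)
  have hg (a : ι × ι) : Measurable fun z : ι → ℝ => (M *ᵥ z) a.1 * (Q *ᵥ z) a.2 :=
    (by fun_prop : Continuous _).measurable
  have hgi (a : ι × ι) : Integrable (fun ω => (M *ᵥ d ω) a.1 * (Q *ᵥ d ω) a.2) μ :=
    ((hd2.mulVec M).eval a.1).integrable_mul ((hd2.mulVec Q).eval a.2)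
  simp only [dotProduct_mul_dotProduct_eq_sum]
  refine ⟨hdh.integrable_sum_mul_comp hvxF hvxi hg hgi, ?_⟩
  rw [hdh.integral_sum_mul_comp hvxF hvxi hg hgi, integral_dotProduct_mulVec hvxi]
  simp only [integral_mulVec_apply_mul_mulVec_apply hd2 M Q hQ hS]

end Factorization

theorem stmt10_general {Ω : Type*} {m0 : MeasurableSpace Ω} (μ : Measure Ω) [IsProbabilityMeasure μ]
    {p n : ℕ} (h : Ω → Fin p → ℝ)
    (v xhat : Ω → Fin n → ℝ)
    (hv : Measurable[MeasurableSpace.comap h inferInstance] v)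
    (hv2 : MemLp v 2 μ)
    (hxhat : Measurable[MeasurableSpace.comap h inferInstance] xhat)
    (hxhat2 : MemLp xhat 2 μ)
    (d : Ω → Fin n → ℝ) (hindep : IndepFun d h μ)
    (hdmean : ∀ i, ∫ ω, d ω i ∂μ = 0) (hd4 : MemLp d 4 μ)
    (Q : Matrix (Fin n) (Fin n) ℝ) (hQ : Q.IsSymm)
    (S : Matrix (Fin n) (Fin n) ℝ) (hS : ∀ i j, S i j = ∫ ω, d ω i * d ω j ∂μ)
    (γ : Fin n → ℝ) (hγ : ∀ i, γ i = ∫ ω, d ω i * (d ω ⬝ᵥ Q.mulVec (d ω)) ∂μ)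
    (y : Ω → ℝ)
    (hy : y = fun ω =>
      d ω ⬝ᵥ Q.mulVec (d ω) - (S * Q).trace + 2 * (xhat ω ⬝ᵥ Q.mulVec (d ω)))
    (M : Matrix (Fin n) (Fin n) ℝ) :
    Integrable (fun ω => (v ω ⬝ᵥ M.mulVec (d ω)) * y ω) μ ∧
      ∫ ω, (v ω ⬝ᵥ M.mulVec (d ω)) * y ω ∂μ =
        (∫ ω, v ω ⬝ᵥ M.mulVec γ ∂μ) +
          2 * ∫ ω, v ω ⬝ᵥ (M * S * Q).mulVec (xhat ω) ∂μ := by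
  obtain ⟨hI₁, hE₁⟩ := hindep.integrable_and_integral_dotProduct_mulVec_mul_quadForm_sub
    hv hv2 hd4 hdmean M Q hγ (S * Q).trace
  obtain ⟨hI₂, hE₂⟩ := hindep.integrable_and_integral_dotProduct_mulVec_mul_dotProduct_mulVec
    hv hxhat hv2 hxhat2 (hd4.mono_exponent (by norm_num)) M hQ hS
  have hsplit : (fun ω => (v ω ⬝ᵥ M *ᵥ d ω) * y ω) = fun ω =>
      (v ω ⬝ᵥ M *ᵥ d ω) * (d ω ⬝ᵥ Q *ᵥ d ω - (S * Q).trace) +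
        2 * ((v ω ⬝ᵥ M *ᵥ d ω) * (xhat ω ⬝ᵥ Q *ᵥ d ω)) := by
    subst hy
    funext ω
    ring
  rw [hsplit]
  exact ⟨hI₁.add (hI₂.const_mul 2),
    by rw [integral_add hI₁ (hI₂.const_mul 2), integral_const_mul, hE₁, hE₂]⟩

theorem stmt10 {Ω : Type*} {m0 : MeasurableSpace Ω} (μ : Measure Ω) [IsProbabilityMeasure μ]
    {p n : ℕ} (h : Ω → Fin p → ℝ) (hh : Measurable h)
    (v xhat : Ω → Fin n → ℝ)
    (hv : Measurable[MeasurableSpace.comap h inferInstance] v)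
    (hv2 : MemLp v 2 μ)
    (hxhat : Measurable[MeasurableSpace.comap h inferInstance] xhat)
    (hxhat2 : MemLp xhat 2 μ)
    (d : Ω → Fin n → ℝ) (hd : Measurable d) (hindep : IndepFun d h μ)
    (hdmean : ∀ i, ∫ ω, d ω i ∂μ = 0) (hd4 : MemLp d 4 μ)
    (Q : Matrix (Fin n) (Fin n) ℝ) (hQ : Q.IsSymm)
    (S : Matrix (Fin n) (Fin n) ℝ) (hS : ∀ i j, S i j = ∫ ω, d ω i * d ω j ∂μ)
    (γ : Fin n → ℝ) (hγ : ∀ i, γ i = ∫ ω, d ω i * (d ω ⬝ᵥ Q.mulVec (d ω)) ∂μ)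
    (y : Ω → ℝ)
    (hy : y = fun ω =>
      d ω ⬝ᵥ Q.mulVec (d ω) - (S * Q).trace + 2 * (xhat ω ⬝ᵥ Q.mulVec (d ω)))
    (M : Matrix (Fin n) (Fin n) ℝ) :
    Integrable (fun ω => (v ω ⬝ᵥ M.mulVec (d ω)) * y ω) μ ∧
      ∫ ω, (v ω ⬝ᵥ M.mulVec (d ω)) * y ω ∂μ =
        (∫ ω, v ω ⬝ᵥ M.mulVec γ ∂μ) +
          2 * ∫ ω, v ω ⬝ᵥ (M * S * Q).mulVec (xhat ω) ∂μ :=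
  stmt10_general (m0 := m0) μ h v xhat hv hv2 hxhat hxhat2 d hindep hdmean hd4 Q hQ S hS γ hγ y hy M
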